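/- There exist β ∈ ℝ, M > 0 and a four times continuously differentiable function φ : [0,∞) → ℝ such that: φ(r) = 3r − ∫₁^r dt/(1 + log t) + β for all r ≥ 1; φ(0) = 0 and φ′(0) = 0; φ(r) > 0 and φ′(r) > 0 for all r > 0; φ″(r) > 0 for all r ≥ 0; and φ(r) ≤ M r for all r ≥ 0. In particular, for r ≥ 1 one has φ′(r) = 3 − 1/(1 + log r) and φ″(r) = 1/(r(1 + log r)²). -/

import Mathlib

/-!
On `[1, ∞)` the weight is forced: `φ' = 3 - (1 + log r)⁻¹`. We extend the profile
`(1 + log r)⁻¹` to `[0, 1]` by a quintic polynomial that matches it to third order at `r = 1`,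
equals `3` at `r = 0` and is strictly decreasing, and put `φ(r) = ∫₀ʳ (3 - profile)`.
The glued profile is `C³` and strictly decreasing, with values in `(0, 3]`; hence `φ` is `C⁴`,
`φ'(0) = 0`, `φ' > 0` on `(0, ∞)`, `φ'' = -profile' > 0`, and `0 ≤ φ' ≤ 3` gives `φ(r) ≤ 3r`.
-/

open Set Real MeasureTheory

theorem contDiff_succ_of_hasDerivAt {𝕜 F : Type*} [NontriviallyNormedField 𝕜]
    [NormedAddCommGroup F] [NormedSpace 𝕜 F] {n : ℕ} {f f' : 𝕜 → F}
    (hf : ∀ x, HasDerivAt f (f' x) x) (hf' : ContDiff 𝕜 n f') : ContDiff 𝕜 (n + 1) f := by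
  have hderiv : deriv f = f' := funext fun x => (hf x).deriv
  exact contDiff_succ_iff_deriv.2 ⟨fun x => (hf x).differentiableAt, by simp, hderiv ▸ hf'⟩

namespace CarlemanWeight

noncomputable section

def glueAt (a : ℝ) (f g : ℝ → ℝ) (x : ℝ) : ℝ := if x ≤ a then f x else g x

section Glue

variable {a x : ℝ} {f g f' g' : ℝ → ℝ}

theorem glueAt_of_le (h : x ≤ a) : glueAt a f g x = f x := if_pos h

theorem glueAt_of_ge (hfg : f a = g a) (h : a ≤ x) : glueAt a f g x = g x := by
  rcases h.eq_or_lt with rfl | h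
  · exact (if_pos le_rfl).trans hfg
  · exact if_neg h.not_ge

theorem continuous_glueAt (hf : ContinuousOn f (Iic a)) (hg : ContinuousOn g (Ici a))
    (hfg : f a = g a) : Continuous (glueAt a f g) :=
  continuous_if_le continuous_id continuous_const hf hg fun _ hx => hx ▸ hfg

theorem hasDerivAt_glueAt (hf : ∀ x ≤ a, HasDerivAt f (f' x) x)
    (hg : ∀ x ≥ a, HasDerivAt g (g' x) x) (hfg : f a = g a) (hfg' : f' a = g' a) (x : ℝ) :
    HasDerivAt (glueAt a f g) (glueAt a f' g' x) x := by
  have left : ∀ x ≤ a, HasDerivWithinAt (glueAt a f g) (f' x) (Iic a) x := fun x hx =>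
    (hf x hx).hasDerivWithinAt.congr_of_mem (fun _ hy => glueAt_of_le hy) hx
  have right : ∀ x ≥ a, HasDerivWithinAt (glueAt a f g) (g' x) (Ici a) x := fun x hx =>
    (hg x hx).hasDerivWithinAt.congr_of_mem (fun _ hy => glueAt_of_ge hfg hy) hx
  rcases lt_trichotomy x a with hx | rfl | hx
  · rw [glueAt_of_le hx.le]
    exact (left x hx.le).hasDerivAt (Iic_mem_nhds hx)
  · rw [glueAt_of_le le_rfl]
    have := (left x le_rfl).union (hfg' ▸ right x le_rfl)
    rwa [Iic_union_Ici, hasDerivWithinAt_univ] at this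
  · rw [glueAt_of_ge hfg' hx.le]
    exact (right x hx.le).hasDerivAt (Ici_mem_nhds hx)

end Glue

/-- The Taylor polynomial of order 3 of `(1 + log s)⁻¹` at `s = 1`, plus two quartic and quintic
corrections making it equal to `3` at `s = 0` while keeping it strictly decreasing. -/
def quintic (s : ℝ) : ℝ :=
  1 + (1 - s) + 3 / 2 * (1 - s) ^ 2 + 7 / 3 * (1 - s) ^ 3 - 77 / 6 * (1 - s) ^ 4 + 10 * (1 - s) ^ 5

def quintic' (s : ℝ) : ℝ :=
  -(1 + 3 * (1 - s) + 7 * (1 - s) ^ 2 - 154 / 3 * (1 - s) ^ 3 + 50 * (1 - s) ^ 4)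

def quintic'' (s : ℝ) : ℝ := 3 + 14 * (1 - s) - 154 * (1 - s) ^ 2 + 200 * (1 - s) ^ 3

def quintic''' (s : ℝ) : ℝ := -(14 - 308 * (1 - s) + 600 * (1 - s) ^ 2)

theorem hasDerivAt_quintic (s : ℝ) : HasDerivAt quintic (quintic' s) s := by
  have h := (hasDerivAt_id s).const_sub 1
  exact (((((h.const_add 1).add ((h.pow 2).const_mul _)).add ((h.pow 3).const_mul _)).sub
    ((h.pow 4).const_mul _)).add ((h.pow 5).const_mul _)).congr_deriv (by simp [quintic']; ring)

theorem hasDerivAt_quintic' (s : ℝ) : HasDerivAt quintic' (quintic'' s) s := by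
  have h := (hasDerivAt_id s).const_sub 1
  exact (((((h.const_mul 3).const_add 1).add ((h.pow 2).const_mul _)).sub
    ((h.pow 3).const_mul _)).add ((h.pow 4).const_mul _)).neg.congr_deriv
    (by simp [quintic'']; ring)

theorem hasDerivAt_quintic'' (s : ℝ) : HasDerivAt quintic'' (quintic''' s) s := by
  have h := (hasDerivAt_id s).const_sub 1
  exact ((((h.const_mul 14).const_add 3).sub ((h.pow 2).const_mul _)).add
    ((h.pow 3).const_mul _)).congr_deriv (by simp [quintic''']; ring)

theorem quintic'_neg (s : ℝ) : quintic' s < 0 := by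
  unfold quintic'
  nlinarith [sq_nonneg (10 * (1 - s) ^ 2 - 6 * (1 - s)),
    sq_nonneg (5 * (1 - s) ^ 2 - 3 * (1 - s) - 1)]

theorem one_add_log_pos {t : ℝ} (ht : 1 ≤ t) : 0 < 1 + log t := by
  have := log_nonneg ht
  linarith

def invOneAddLog (t : ℝ) : ℝ := (1 + log t)⁻¹
def invOneAddLog' (t : ℝ) : ℝ := -(t * (1 + log t) ^ 2)⁻¹
def invOneAddLog'' (t : ℝ) : ℝ := (3 + log t) / (t ^ 2 * (1 + log t) ^ 3)
def invOneAddLog''' (t : ℝ) : ℝ :=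
  -(2 * ((1 + log t) ^ 2 + 3 * (1 + log t) + 3) / (t ^ 3 * (1 + log t) ^ 4))

section
variable {t : ℝ} (ht : 0 < t) (hw : 1 + log t ≠ 0)
include ht hw

theorem hasDerivAt_invOneAddLog : HasDerivAt invOneAddLog (invOneAddLog' t) t := by
  have h := ((hasDerivAt_log ht.ne').const_add 1).inv hw
  exact h.congr_deriv (by simp only [invOneAddLog']; field_simp)

theorem hasDerivAt_invOneAddLog' : HasDerivAt invOneAddLog' (invOneAddLog'' t) t := by
  have h := ((hasDerivAt_id' t).fun_mul (((hasDerivAt_log ht.ne').const_add 1).fun_pow 2)).inv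
    (by positivity)
  exact h.neg.congr_deriv (by simp only [invOneAddLog'']; field_simp; ring)

theorem hasDerivAt_invOneAddLog'' : HasDerivAt invOneAddLog'' (invOneAddLog''' t) t := by
  have hw' := (hasDerivAt_log ht.ne').const_add 1
  have h := ((hasDerivAt_log ht.ne').const_add 3).div
    (((hasDerivAt_id' t).fun_pow 2).fun_mul (hw'.fun_pow 3)) (by positivity)
  exact h.congr_deriv (by simp only [invOneAddLog''']; field_simp; ring)

end

theorem continuousOn_invOneAddLog''' : ContinuousOn invOneAddLog''' (Ici 1) := by
  intro t (ht : 1 ≤ t)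
  have h0 : t ≠ 0 := by positivity
  have hw : t ^ 3 * (1 + log t) ^ 4 ≠ 0 := by have := log_nonneg ht; positivity
  exact ContinuousAt.continuousWithinAt (by unfold invOneAddLog'''; fun_prop (disch := assumption))

theorem invOneAddLog'_neg {t : ℝ} (ht : 0 < t) (hw : 1 + log t ≠ 0) : invOneAddLog' t < 0 :=
  neg_neg_of_pos (inv_pos.2 (mul_pos ht (by positivity)))

theorem quintic_one : quintic 1 = invOneAddLog 1 := by norm_num [quintic, invOneAddLog]
theorem quintic'_one : quintic' 1 = invOneAddLog' 1 := by norm_num [quintic', invOneAddLog']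
theorem quintic''_one : quintic'' 1 = invOneAddLog'' 1 := by norm_num [quintic'', invOneAddLog'']
theorem quintic'''_one : quintic''' 1 = invOneAddLog''' 1 := by
  norm_num [quintic''', invOneAddLog''']

def profile : ℝ → ℝ := glueAt 1 quintic invOneAddLog
def profile' : ℝ → ℝ := glueAt 1 quintic' invOneAddLog'
def profile'' : ℝ → ℝ := glueAt 1 quintic'' invOneAddLog''
def profile''' : ℝ → ℝ := glueAt 1 quintic''' invOneAddLog'''

theorem hasDerivAt_profile (x : ℝ) : HasDerivAt profile (profile' x) x :=
  hasDerivAt_glueAt (fun s _ => hasDerivAt_quintic s)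
    (fun t ht => hasDerivAt_invOneAddLog (by linarith) (one_add_log_pos ht).ne')
    quintic_one quintic'_one x

theorem hasDerivAt_profile' (x : ℝ) : HasDerivAt profile' (profile'' x) x :=
  hasDerivAt_glueAt (fun s _ => hasDerivAt_quintic' s)
    (fun t ht => hasDerivAt_invOneAddLog' (by linarith) (one_add_log_pos ht).ne')
    quintic'_one quintic''_one x

theorem hasDerivAt_profile'' (x : ℝ) : HasDerivAt profile'' (profile''' x) x :=
  hasDerivAt_glueAt (fun s _ => hasDerivAt_quintic'' s)
    (fun t ht => hasDerivAt_invOneAddLog'' (by linarith) (one_add_log_pos ht).ne')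
    quintic''_one quintic'''_one x

theorem continuous_profile''' : Continuous profile''' :=
  continuous_glueAt (by unfold quintic'''; fun_prop) continuousOn_invOneAddLog''' quintic'''_one

theorem contDiff_profile : ContDiff ℝ 3 profile :=
  contDiff_succ_of_hasDerivAt (n := 2) hasDerivAt_profile <|
    contDiff_succ_of_hasDerivAt (n := 1) hasDerivAt_profile' <|
      contDiff_succ_of_hasDerivAt (n := 0) hasDerivAt_profile'' <|
        contDiff_zero.2 continuous_profile'''

theorem profile_zero : profile 0 = 3 := by
  norm_num [profile, glueAt_of_le, quintic]

theorem profile_one : profile 1 = 1 := by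
  norm_num [profile, glueAt_of_le, quintic]

theorem profile_of_one_le {t : ℝ} (ht : 1 ≤ t) : profile t = (1 + log t)⁻¹ :=
  glueAt_of_ge quintic_one ht

theorem profile'_of_one_le {t : ℝ} (ht : 1 ≤ t) : profile' t = -(t * (1 + log t) ^ 2)⁻¹ :=
  glueAt_of_ge quintic'_one ht

theorem profile'_neg (x : ℝ) : profile' x < 0 := by
  rcases le_or_gt x 1 with hx | hx
  · exact (glueAt_of_le hx).trans_lt (quintic'_neg x)
  · exact (glueAt_of_ge quintic'_one hx.le).trans_lt
      (invOneAddLog'_neg (by linarith) (one_add_log_pos hx.le).ne')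

theorem strictAnti_profile : StrictAnti profile :=
  strictAnti_of_deriv_neg fun x => (hasDerivAt_profile x).deriv ▸ profile'_neg x

theorem profile_pos (x : ℝ) : 0 < profile x := by
  rcases le_total x 1 with hx | hx
  · exact profile_one ▸ strictAnti_profile.antitone hx |>.trans_lt' one_pos
  · rw [profile_of_one_le hx]
    exact inv_pos.2 (one_add_log_pos hx)

theorem profile_lt_three {x : ℝ} (hx : 0 < x) : profile x < 3 :=
  profile_zero ▸ strictAnti_profile hx

def weight (r : ℝ) : ℝ := ∫ t in (0 : ℝ)..r, (3 - profile t)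

theorem hasDerivAt_weight (r : ℝ) : HasDerivAt weight (3 - profile r) r :=
  ((continuous_const.sub contDiff_profile.continuous).integral_hasStrictDerivAt 0 r).hasDerivAt

theorem contDiff_weight : ContDiff ℝ 4 weight :=
  contDiff_succ_of_hasDerivAt (n := 3) hasDerivAt_weight (contDiff_const.sub contDiff_profile)

theorem derivWithin_weight {r : ℝ} (hr : 0 ≤ r) : derivWithin weight (Ici 0) r = 3 - profile r :=
  (hasDerivAt_weight r).hasDerivWithinAt.derivWithin (uniqueDiffOn_Ici 0 r hr)

theorem derivWithin_derivWithin_weight {r : ℝ} (hr : 0 ≤ r) :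
    derivWithin (derivWithin weight (Ici 0)) (Ici 0) r = -profile' r := by
  have hEq : EqOn (derivWithin weight (Ici 0)) (fun x => 3 - profile x) (Ici 0) :=
    fun _ hx => derivWithin_weight hx
  rw [derivWithin_congr hEq (hEq hr)]
  exact ((hasDerivAt_profile r).const_sub 3).hasDerivWithinAt.derivWithin (uniqueDiffOn_Ici 0 r hr)

theorem weight_eq_sub_integral (r : ℝ) : weight r = 3 * r - ∫ t in (0 : ℝ)..r, profile t := by
  rw [weight, intervalIntegral.integral_sub intervalIntegrable_const
    (contDiff_profile.continuous.intervalIntegrable 0 r)]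
  simp [mul_comm]

theorem weight_eq_of_one_le {r : ℝ} (hr : 1 ≤ r) :
    weight r = 3 * r - (∫ t in (1 : ℝ)..r, (1 + log t)⁻¹) - ∫ t in (0 : ℝ)..1, profile t := by
  have hint := contDiff_profile.continuous.intervalIntegrable (μ := volume)
  have htail : ∫ t in (1 : ℝ)..r, profile t = ∫ t in (1 : ℝ)..r, (1 + log t)⁻¹ :=
    intervalIntegral.integral_congr fun t ht => profile_of_one_le (uIcc_of_le hr ▸ ht).1
  rw [weight_eq_sub_integral,
    ← intervalIntegral.integral_add_adjacent_intervals (hint 0 1) (hint 1 r), htail]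
  ring

theorem weight_pos {r : ℝ} (hr : 0 < r) : 0 < weight r :=
  intervalIntegral.intervalIntegral_pos_of_pos_on
    ((continuous_const.sub contDiff_profile.continuous).intervalIntegrable 0 r)
    (fun _ hx => sub_pos.2 (profile_lt_three hx.1)) hr

theorem weight_le_three_mul {r : ℝ} (hr : 0 ≤ r) : weight r ≤ 3 * r := by
  rw [weight_eq_sub_integral]
  have := intervalIntegral.integral_nonneg (μ := volume) hr fun x _ => (profile_pos x).le
  linarith

end

end CarlemanWeight

open CarlemanWeight

/-- existence of the convex Carleman weight with asymptotically linear
growth, equal to `3r − ∫₁^r dt/(1 + log t) + β` for `r ≥ 1`. -/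
theorem statement19 :
    ∃ (β M : ℝ) (φ : ℝ → ℝ), 0 < M ∧
      -- φ is four times continuously differentiable on [0,∞)
      ContDiffOn ℝ 4 φ (Set.Ici 0) ∧
      -- φ(r) = 3r − ∫₁^r dt/(1 + log t) + β for r ≥ 1
      (∀ r : ℝ, 1 ≤ r → φ r = 3 * r - (∫ t in (1:ℝ)..r, (1 + Real.log t)⁻¹) + β) ∧
      -- φ(0) = 0 and φ′(0) = 0 (one-sided derivative at 0)
      φ 0 = 0 ∧ derivWithin φ (Set.Ici 0) 0 = 0 ∧
      -- φ(r) > 0 and φ′(r) > 0 for r > 0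
      (∀ r : ℝ, 0 < r → 0 < φ r) ∧
      (∀ r : ℝ, 0 < r → 0 < derivWithin φ (Set.Ici 0) r) ∧
      -- φ″(r) > 0 for r ≥ 0
      (∀ r : ℝ, 0 ≤ r → 0 < derivWithin (derivWithin φ (Set.Ici 0)) (Set.Ici 0) r) ∧
      -- φ(r) ≤ M r for r ≥ 0
      (∀ r : ℝ, 0 ≤ r → φ r ≤ M * r) ∧
      -- in particular, for r ≥ 1, φ′(r) = 3 − 1/(1 + log r)
      (∀ r : ℝ, 1 ≤ r → derivWithin φ (Set.Ici 0) r = 3 - (1 + Real.log r)⁻¹) ∧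
      -- and φ″(r) = 1/(r(1 + log r)²)
      (∀ r : ℝ, 1 ≤ r →
        derivWithin (derivWithin φ (Set.Ici 0)) (Set.Ici 0) r
          = (r * (1 + Real.log r)^2)⁻¹) := by
  refine ⟨-∫ t in (0 : ℝ)..1, profile t, 3, weight, three_pos, contDiff_weight.contDiffOn,
    fun r hr => ?_, by simp [weight], ?_, fun r => weight_pos, fun r hr => ?_, fun r hr => ?_,
    fun r => weight_le_three_mul, fun r hr => ?_, fun r hr => ?_⟩
  · rw [weight_eq_of_one_le hr]
    ring
  · rw [derivWithin_weight le_rfl, profile_zero, sub_self]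
  · rw [derivWithin_weight hr.le]
    exact sub_pos.2 (profile_lt_three hr)
  · rw [derivWithin_derivWithin_weight hr]
    exact neg_pos.2 (profile'_neg r)
  · rw [derivWithin_weight (zero_le_one.trans hr), profile_of_one_le hr]
  · rw [derivWithin_derivWithin_weight (zero_le_one.trans hr), profile'_of_one_le hr, neg_neg]
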